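/- arXiv:1310.0618 — 2 statements merged into one kernel-verified Lean document; each statement's English description precedes it below -/
import Mathlib

section
/- Suppose R = Dic(A,y,x) is not isomorphic to Q₈ × C₂^ℓ for any ℓ. For any proper subgroup U < A, the set X = {a ∈ A : a ∉ U and a² ≠ y} has cardinality at least |A|/4. -/
/-!
Write `A` as the union of `U`, the set `S` of square roots of `y`, and `X`. A proper subgroup
has at most `|A|/2` elements. If `S` is nonempty it is a coset of the kernel of squaring, so
`|S| = |A| / |A²|`, where the image `A²` of squaring contains the involution `y`; hence `|A²|`
is even, and `|S| ≤ |A|/4` unless `A² = {1, y}`. In that case the elements `a` with `a² = 1`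
are central; a complement `E` of `⟨y⟩` among them exists by linear algebra over `𝔽₂`, and
`(g, e) ↦ g e` with `Q₈ = ⟨s, x⟩` (`s² = y`) is an isomorphism `Q₈ × E ≃* R`.
-/

theorem pow_zmod_val_add {G : Type*} [Monoid G] {a : G} {m : ℕ} [NeZero m] (ha : a ^ m = 1)
    (i j : ZMod m) : a ^ (i + j).val = a ^ i.val * a ^ j.val := by
  rw [← pow_add, ZMod.val_add, ← pow_eq_pow_mod _ ha]

theorem pow_zmod_val_sub {G : Type*} [Group G] {a : G} {m : ℕ} [NeZero m] (ha : a ^ m = 1)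
    (i j : ZMod m) : a ^ (i - j).val = a ^ i.val * (a ^ j.val)⁻¹ := by
  rw [eq_mul_inv_iff_mul_eq, ← pow_zmod_val_add ha, sub_add_cancel]

theorem pow_mul_eq_mul_inv_pow {G : Type*} [Group G] {a x : G} (hxa : x⁻¹ * a * x = a⁻¹)
    (k : ℕ) : a ^ k * x = x * (a ^ k)⁻¹ := by
  have h : x⁻¹ * a ^ k * x = (a ^ k)⁻¹ := by
    simpa [hxa, inv_pow] using (conj_pow (a := x⁻¹) (b := a) (i := k)).symm
  rw [← h]; group

namespace QuaternionGroup

variable {G : Type*} [Group G] {n : ℕ} [NeZero n]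

def toGroup (a x : G) (ha : a ^ (2 * n) = 1) (hx : x ^ 2 = a ^ n) (hxa : x⁻¹ * a * x = a⁻¹) :
    QuaternionGroup n →* G where
  toFun
    | .a i => a ^ i.val
    | .xa i => x * a ^ i.val
  map_one' := by
    show a ^ (0 : ZMod (2 * n)).val = 1
    rw [ZMod.val_zero, pow_zero]
  map_mul' := by
    rintro (i | i) (j | j)
    · simp only [a_mul_a, pow_zmod_val_add ha]
    · simp only [a_mul_xa, pow_zmod_val_sub ha, ← mul_assoc, pow_mul_eq_mul_inv_pow hxa]
      rw [mul_assoc, mul_assoc, (Commute.pow_pow_self a _ _).inv_right.eq]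
    · simp only [xa_mul_a, pow_zmod_val_add ha, mul_assoc]
    · have hn : (n : ZMod (2 * n)).val = n :=
        ZMod.val_natCast_of_lt (by have := NeZero.pos n; omega)
      simp only [xa_mul_xa, pow_zmod_val_sub ha, pow_zmod_val_add ha, hn]
      rw [mul_assoc x, ← mul_assoc _ x, pow_mul_eq_mul_inv_pow hxa, ← hx, sq]
      group

@[simp]
theorem toGroup_a (a x : G) (ha hx hxa) (i : ZMod (2 * n)) :
    toGroup (n := n) a x ha hx hxa (.a i) = a ^ i.val := rfl

@[simp]
theorem toGroup_xa (a x : G) (ha hx hxa) (i : ZMod (2 * n)) :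
    toGroup (n := n) a x ha hx hxa (.xa i) = x * a ^ i.val := rfl

end QuaternionGroup

section ExponentTwo

variable {G : Type*} [CommGroup G]

abbrev zmodTwoModule (hG : ∀ g : G, g ^ 2 = 1) : Module (ZMod 2) (Additive G) :=
  AddCommGroup.zmodModule fun g => hG g.toMul

theorem exists_subgroup_notMem_forall_mem_or_mul_mem (hG : ∀ g : G, g ^ 2 = 1) {y : G}
    (hy : y ≠ 1) : ∃ E : Subgroup G, y ∉ E ∧ ∀ g, g ∈ E ∨ y * g ∈ E := by
  let := zmodTwoModule hG
  obtain ⟨f, hf⟩ := Module.Projective.exists_dual_ne_zero (ZMod 2)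
    (x := Additive.ofMul y) (by simpa using hy)
  have hZ2 : ∀ c : ZMod 2, c = 0 ∨ 1 + c = 0 := by decide
  have hfy : f (.ofMul y) = 1 := by
    rcases hZ2 (f (.ofMul y)) with h | h
    · exact absurd h hf
    · exact (neg_eq_of_add_eq_zero_right h).symm
  refine ⟨(AddMonoidHom.toMultiplicativeRight f.toAddMonoidHom).ker, ?_, fun g => ?_⟩
  · simp [hfy]
  · simpa [← ofAdd_add, hfy] using hZ2 (f (.ofMul g))

theorem exists_mulEquiv_pi_zmod_two [Finite G] (hG : ∀ g : G, g ^ 2 = 1) :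
    ∃ ℓ : ℕ, Nonempty (G ≃* Multiplicative (Fin ℓ → ZMod 2)) := by
  let := zmodTwoModule hG
  have : Module.Finite (ZMod 2) (Additive G) := Module.Finite.of_finite
  exact ⟨_, ⟨(MulEquiv.multiplicativeAdditive G).symm.trans
    (Module.finBasis (ZMod 2) (Additive G)).equivFun.toAddEquiv.toMultiplicative⟩⟩

end ExponentTwo

theorem four_mul_ncard_sq_eq_le {G : Type*} [CommGroup G] [Finite G] {y : G} (hy2 : y ^ 2 = 1)
    (hy1 : y ≠ 1) (h : ∃ g : G, g ^ 2 ≠ 1 ∧ g ^ 2 ≠ y) :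
    4 * {g : G | g ^ 2 = y}.ncard ≤ Nat.card G := by
  obtain ⟨g, hg1, hgy⟩ := h
  rcases {g : G | g ^ 2 = y}.eq_empty_or_nonempty with hS | ⟨s, hs⟩
  · simp [hS]
  let sq : G →* G := powMonoidHom 2
  have hfiber : {g : G | g ^ 2 = y}.ncard ≤ Nat.card sq.ker := by
    rw [← SetLike.coe_sort_coe, Nat.card_coe_set_eq]
    refine Set.ncard_le_ncard_of_injOn (s⁻¹ * ·) (fun a (ha : a ^ 2 = y) => ?_)
      (mul_right_injective _).injOn
    simp [sq, mul_pow, inv_pow, ha, show s ^ 2 = y from hs]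
  have hrange : 4 ≤ Nat.card sq.range := by
    have hZ : Subgroup.zpowers y ≤ sq.range := by
      rw [Subgroup.zpowers_le]; exact ⟨s, hs⟩
    have hy : orderOf y = 2 := orderOf_eq_prime hy2 hy1
    have hZcard : Nat.card (Subgroup.zpowers y) = 2 := by rw [Nat.card_zpowers, hy]
    have hne : Subgroup.zpowers y ≠ sq.range := by
      intro hZr
      have : g ^ 2 ∈ Subgroup.zpowers y := hZr ▸ ⟨g, rfl⟩
      classical
      rw [mem_zpowers_iff_mem_range_orderOf, hy] at this
      obtain ⟨k, hk, hyk⟩ := Finset.mem_image.mp this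
      rw [Finset.mem_range] at hk
      interval_cases k
      · exact hg1 (by simpa using hyk.symm)
      · exact hgy (by simpa using hyk.symm)
    have h2 : 2 ∣ Nat.card sq.range := hZcard ▸ Subgroup.card_dvd_of_le hZ
    have h2' : Nat.card sq.range ≠ 2 := fun h =>
      hne (Subgroup.eq_of_le_of_card_ge hZ (by rw [h, hZcard]))
    have : 0 < Nat.card sq.range := Nat.card_pos
    omega
  calc 4 * {g : G | g ^ 2 = y}.ncard ≤ Nat.card sq.range * Nat.card sq.ker :=
        Nat.mul_le_mul hrange hfiber
    _ = Nat.card G := by rw [← Subgroup.index_ker, mul_comm, sq.ker.card_mul_index]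

theorem card_le_four_mul_ncard_of_ne_top {G : Type*} [Group G] [Finite G] {U : Subgroup G}
    (hU : U ≠ ⊤) {y : G} (hS : 4 * {g : G | g ^ 2 = y}.ncard ≤ Nat.card G) :
    Nat.card G ≤ 4 * {g : G | g ∉ U ∧ g ^ 2 ≠ y}.ncard := by
  have hU2 : 2 * Nat.card U ≤ Nat.card G := by
    rw [← U.card_mul_index, mul_comm]
    exact Nat.mul_le_mul_left _ (Subgroup.one_lt_index_of_ne_top hU)
  have hcover : Nat.card G ≤
      Nat.card U + {g : G | g ^ 2 = y}.ncard + {g : G | g ∉ U ∧ g ^ 2 ≠ y}.ncard := by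
    rw [← Set.ncard_univ, ← SetLike.coe_sort_coe, Nat.card_coe_set_eq]
    calc Set.univ.ncard
        ≤ ((U : Set G) ∪ {g | g ^ 2 = y} ∪ {g | g ∉ U ∧ g ^ 2 ≠ y}).ncard := by
          apply Set.ncard_le_ncard _ (Set.toFinite _)
          intro g _
          by_cases g ∈ U <;> by_cases g ^ 2 = y <;> simp_all
      _ ≤ _ := (Set.ncard_union_le _ _).trans (by grw [Set.ncard_union_le])
  omega

theorem Subgroup.exists_le_notMem_forall_mem_or_mul_mem {G : Type*} [Group G] {T : Subgroup G}
    (hTcomm : ∀ a ∈ T, ∀ b ∈ T, a * b = b * a) (hT : ∀ t ∈ T, t ^ 2 = 1) {y : G}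
    (hyT : y ∈ T) (hy : y ≠ 1) :
    ∃ E ≤ T, y ∉ E ∧ ∀ t ∈ T, t ∈ E ∨ y * t ∈ E := by
  have : IsMulCommutative T := IsMulCommutative.of_setLike_mul_comm hTcomm
  open scoped IsMulCommutative in
  obtain ⟨E, hyE, hE⟩ := exists_subgroup_notMem_forall_mem_or_mul_mem (G := T)
    (fun t => Subtype.ext (hT t t.2)) (y := ⟨y, hyT⟩) (by simpa using hy)
  refine ⟨E.map T.subtype, Subgroup.map_subtype_le E, fun h => hyE ?_, fun t ht => ?_⟩
  · exact (Subgroup.mem_map_iff_mem T.subtype_injective).mp h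
  · exact (hE ⟨t, ht⟩).imp (mem_map_of_mem T.subtype) (mem_map_of_mem T.subtype)

section Dicyclic

variable {R : Type*} [Group R] {A : Subgroup R} {x : R}

theorem Subgroup.mem_or_inv_mul_mem_of_index_eq_two (hAind : A.index = 2) (hx : x ∉ A) (r : R) :
    r ∈ A ∨ x⁻¹ * r ∈ A := by
  rw [Subgroup.mul_mem_iff_of_index_two hAind, inv_mem_iff]
  tauto

theorem mem_center_of_sq_eq_one (hAcomm : ∀ a ∈ A, ∀ b ∈ A, a * b = b * a)
    (hconj : ∀ a ∈ A, x⁻¹ * a * x = a⁻¹) (hAind : A.index = 2) (hx : x ∉ A) {a : R}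
    (ha : a ∈ A) (ha2 : a ^ 2 = 1) : a ∈ Subgroup.center R := by
  have hax : a * x = x * a :=
    calc a * x = x * (x⁻¹ * a * x) := by group
      _ = x * a := by rw [hconj a ha, inv_eq_of_mul_eq_one_right (by rwa [← sq])]
  rw [Subgroup.mem_center_iff]
  intro r
  rcases Subgroup.mem_or_inv_mul_mem_of_index_eq_two hAind hx r with hr | hr
  · exact hAcomm r hr a ha
  · calc r * a = x * ((x⁻¹ * r) * a) := by group
      _ = a * x * (x⁻¹ * r) := by rw [hAcomm _ hr a ha, hax, mul_assoc]
      _ = a * r := by group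

theorem exists_central_complement (hAcomm : ∀ a ∈ A, ∀ b ∈ A, a * b = b * a)
    (hconj : ∀ a ∈ A, x⁻¹ * a * x = a⁻¹) (hAind : A.index = 2) (hx : x ∉ A) {y : R}
    (hy : y ∈ A) (hy2 : y ^ 2 = 1) (hy1 : y ≠ 1) :
    ∃ E : Subgroup R, E ≤ A ⊓ Subgroup.center R ∧ (∀ e ∈ E, e ^ 2 = 1) ∧ y ∉ E ∧
      ∀ a ∈ A, a ^ 2 = 1 → a ∈ E ∨ y * a ∈ E := by
  have hT : ∀ t ∈ A ⊓ Subgroup.center R, t ^ 2 = 1 := by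
    rintro t ⟨htA, htZ⟩
    have : t⁻¹ = t := by
      rw [← hconj t htA, mul_assoc, ← Subgroup.mem_center_iff.mp htZ x, inv_mul_cancel_left]
    rw [sq, mul_eq_one_iff_eq_inv, this]
  have hcentral : ∀ a ∈ A, a ^ 2 = 1 → a ∈ Subgroup.center R :=
    fun _ => mem_center_of_sq_eq_one hAcomm hconj hAind hx
  obtain ⟨E, hET, hyE, hE⟩ := Subgroup.exists_le_notMem_forall_mem_or_mul_mem
    (T := A ⊓ Subgroup.center R) (fun a ha b hb => hAcomm a ha.1 b hb.1) hT
    ⟨hy, hcentral y hy hy2⟩ hy1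
  exact ⟨E, hET, fun e he => hT e (hET he), hyE,
    fun a ha ha2 => hE a ⟨ha, hcentral a ha ha2⟩⟩

theorem eq_top_of_mem_of_le {H E : Subgroup R} {y s : R}
    (hAcomm : ∀ a ∈ A, ∀ b ∈ A, a * b = b * a) (hAind : A.index = 2) (hx : x ∉ A)
    (hs : s ∈ A) (hss : s ^ 2 = y) (hsq : ∀ a ∈ A, a ^ 2 = 1 ∨ a ^ 2 = y)
    (hAE : ∀ a ∈ A, a ^ 2 = 1 → a ∈ E ∨ y * a ∈ E) (hsH : s ∈ H) (hxH : x ∈ H)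
    (hEH : E ≤ H) : H = ⊤ := by
  have hyH : y ∈ H := hss ▸ pow_mem hsH 2
  have hA2 : ∀ a ∈ A, a ^ 2 = 1 → a ∈ H := fun a ha ha2 =>
    (hAE a ha ha2).elim (@hEH a) fun h => by simpa using mul_mem (inv_mem hyH) (hEH h)
  have hAH : ∀ a ∈ A, a ∈ H := by
    intro a ha
    rcases hsq a ha with ha2 | ha2
    · exact hA2 a ha ha2
    · have : (s⁻¹ * a) ^ 2 = 1 := by
        rw [(Commute.inv_left (hAcomm s hs a ha)).mul_pow, inv_pow, hss, ha2, inv_mul_cancel]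
      simpa using mul_mem hsH (hA2 _ (mul_mem (inv_mem hs) ha) this)
  refine eq_top_iff.mpr fun r _ => ?_
  rcases Subgroup.mem_or_inv_mul_mem_of_index_eq_two hAind hx r with hr | hr
  · exact hAH r hr
  · simpa using mul_mem hxH (hAH _ hr)

theorem exists_mulEquiv_quaternionGroup_prod [Finite R] {y s : R}
    (hAcomm : ∀ a ∈ A, ∀ b ∈ A, a * b = b * a) (hy2 : y ^ 2 = 1) (hy1 : y ≠ 1)
    (hx : x ∉ A) (hx2 : x ^ 2 = y) (hconj : ∀ a ∈ A, x⁻¹ * a * x = a⁻¹)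
    (hAind : A.index = 2) (hs : s ∈ A) (hss : s ^ 2 = y)
    (hsq : ∀ a ∈ A, a ^ 2 = 1 ∨ a ^ 2 = y) :
    ∃ ℓ : ℕ, Nonempty (R ≃* QuaternionGroup 2 × Multiplicative (Fin ℓ → ZMod 2)) := by
  have hy : y ∈ A := hss ▸ pow_mem hs 2
  obtain ⟨E, hEAZ, hE2, hyE, hAE⟩ := exists_central_complement hAcomm hconj hAind hx hy hy2 hy1
  have hs4 : s ^ 4 = 1 := by rw [show 4 = 2 * 2 from rfl, pow_mul, hss, hy2]
  let φ := QuaternionGroup.toGroup s x hs4 (hx2.trans hss.symm) (hconj s hs)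
  let χ := φ.noncommCoprod E.subtype fun g e => (Subgroup.mem_center_iff.mp (hEAZ e.2).2 (φ g))
  have hχ (g : QuaternionGroup 2) (e : E) : χ (g, e) = φ g * e := rfl
  have hinj : Function.Injective χ := by
    rw [injective_iff_map_eq_one]
    rintro ⟨g | g, e⟩ h
    · replace h : s ^ g.val * e = 1 := h
      have hgE : s ^ g.val ∈ E := by
        rw [eq_inv_of_mul_eq_one_left h]; exact inv_mem e.2
      have hord : orderOf s = 4 :=
        orderOf_eq_prime_pow (p := 2) (n := 1) (by rw [pow_one, hss]; exact hy1) hs4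
      have h4 : 4 ∣ g.val * 2 := by
        rw [← hord, orderOf_dvd_iff_pow_eq_one, pow_mul]; exact hE2 _ hgE
      have hg4 : g.val < 4 := ZMod.val_lt g
      obtain hg | hg : g.val = 0 ∨ g.val = 2 := by omega
      · rw [hg, pow_zero, one_mul] at h
        rw [(ZMod.val_eq_zero g).mp hg, QuaternionGroup.a_zero]
        exact Prod.ext rfl (Subtype.ext h)
      · rw [hg, hss] at hgE; exact absurd hgE hyE
    · replace h : x * (s ^ g.val * e) = 1 := by rw [← mul_assoc]; exact h
      have hxA : x ∈ A := eq_inv_of_mul_eq_one_left h ▸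
        inv_mem (mul_mem (pow_mem hs _) (hEAZ e.2).1)
      exact absurd hxA hx
  have hsurj : Function.Surjective χ := by
    rw [← MonoidHom.range_eq_top]
    exact eq_top_of_mem_of_le hAcomm hAind hx hs hss hsq hAE
      ⟨(.a 1, 1), by simp [hχ, φ, show (1 : ZMod 4).val = 1 from rfl]⟩
      ⟨(.xa 0, 1), by simp [hχ, φ]⟩ fun e he => ⟨(1, ⟨e, he⟩), by simp [hχ]⟩
  have : IsMulCommutative E := IsMulCommutative.of_setLike_mul_comm
    fun a ha b hb => hAcomm a (hEAZ ha).1 b (hEAZ hb).1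
  open scoped IsMulCommutative in
  obtain ⟨ℓ, ⟨e⟩⟩ := exists_mulEquiv_pi_zmod_two (G := E) fun e => Subtype.ext (hE2 e e.2)
  exact ⟨ℓ, ⟨(MulEquiv.ofBijective χ ⟨hinj, hsurj⟩).symm.trans
    (MulEquiv.prodCongr (MulEquiv.refl _) e)⟩⟩

end Dicyclic

theorem stmt7_general {R : Type*} [Group R] [Fintype R] (A : Subgroup R) (y x : R)
    (hAcomm : ∀ a ∈ A, ∀ b ∈ A, a * b = b * a)
    (hy : y ∈ A) (hy2 : y ^ 2 = 1) (hy1 : y ≠ 1)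
    (hx : x ∉ A) (hx2 : x ^ 2 = y)
    (hconj : ∀ a ∈ A, x⁻¹ * a * x = a⁻¹)
    (hAind : A.index = 2)
    (hnotQ : ¬ ∃ ℓ : ℕ,
      Nonempty (R ≃* QuaternionGroup 2 × Multiplicative (Fin ℓ → ZMod 2)))
    (U : Subgroup R) (hU : U < A) :
    Nat.card A ≤ 4 * Set.ncard {a : R | a ∈ A ∧ a ∉ U ∧ a ^ 2 ≠ y} := by
  have : IsMulCommutative A := IsMulCommutative.of_setLike_mul_comm hAcomm
  let y' : A := ⟨y, hy⟩
  have hS : 4 * {a : A | a ^ 2 = y'}.ncard ≤ Nat.card A := by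
    by_cases hsq : ∃ a : A, a ^ 2 ≠ 1 ∧ a ^ 2 ≠ y'
    · open scoped IsMulCommutative in
      exact four_mul_ncard_sq_eq_le (Subtype.ext hy2) (by simpa [y'] using hy1) hsq
    rcases {a : A | a ^ 2 = y'}.eq_empty_or_nonempty with h | ⟨s, hs⟩
    · simp [h]
    simp only [not_exists, not_and_or, not_not] at hsq
    refine absurd (exists_mulEquiv_quaternionGroup_prod hAcomm hy2 hy1 hx hx2 hconj hAind s.2
      (congrArg Subtype.val hs) fun a ha => ?_) hnotQ
    simpa [y', Subtype.ext_iff] using hsq ⟨a, ha⟩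
  have hUA : U.subgroupOf A ≠ ⊤ := fun h => hU.not_ge (Subgroup.subgroupOf_eq_top.mp h)
  convert card_le_four_mul_ncard_of_ne_top hUA hS using 2
  rw [← Set.ncard_image_of_injective _ Subtype.val_injective]
  congr 1
  ext a
  simp only [ne_eq, Set.mem_ofPred_eq, Subgroup.mem_subgroupOf, Subtype.ext_iff,
    SubmonoidClass.coe_pow, Set.mem_image, Subtype.exists, exists_and_left, exists_prop,
    exists_eq_right_right, y']
  tauto

/-- If `R = Dic(A,y,x)` is not isomorphic to `Q₈ × C₂^ℓ` for any `ℓ`, then for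
any proper subgroup `U < A`, the set `X = {a ∈ A : a ∉ U, a² ≠ y}` has
cardinality at least `|A|/4`. -/
theorem stmt7 {R : Type*} [Group R] [Fintype R] (A : Subgroup R) (y x : R)
    (hAcomm : ∀ a ∈ A, ∀ b ∈ A, a * b = b * a)
    (hexp : ∃ a ∈ A, a ^ 2 ≠ 1)
    (hy : y ∈ A) (hy2 : y ^ 2 = 1) (hy1 : y ≠ 1)
    (hx : x ∉ A) (hx2 : x ^ 2 = y)
    (hconj : ∀ a ∈ A, x⁻¹ * a * x = a⁻¹)
    (hAind : A.index = 2)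
    (hnotQ : ¬ ∃ ℓ : ℕ,
      Nonempty (R ≃* QuaternionGroup 2 × Multiplicative (Fin ℓ → ZMod 2)))
    (U : Subgroup R) (hU : U < A) :
    Nat.card A ≤ 4 * Set.ncard {a : R | a ∈ A ∧ a ∉ U ∧ a ^ 2 ≠ y} :=
  stmt7_general A y x hAcomm hy hy2 hy1 hx hx2 hconj hAind hnotQ U hU
end

section
/- A finite primitive permutation group whose point-stabilisers are generalised dicyclic groups is of affine type. -/
open MulAction

/-- A permutation action is primitive if it is transitive and all blocks are
trivial. -/
def IsPrimitiveAction (G Ω : Type*) [Group G] [MulAction G Ω] : Prop :=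
  IsPretransitive G Ω ∧ ∀ B : Set Ω, IsBlock G B → IsTrivialBlock B

/-- A group is generalised dicyclic if it contains an abelian subgroup `A` of
index 2 of exponent greater than 2, an involution `y ∈ A` and an element
`x ∉ A` with `x ^ 2 = y` inverting `A` by conjugation. -/
def IsGenDicyclic (G : Type*) [Group G] : Prop :=
  ∃ (A : Subgroup G) (y x : G),
    (∀ a ∈ A, ∀ b ∈ A, a * b = b * a) ∧ (∃ a ∈ A, a ^ 2 ≠ 1) ∧
    y ∈ A ∧ y ^ 2 = 1 ∧ y ≠ 1 ∧ x ∉ A ∧ x ^ 2 = y ∧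
    (∀ a ∈ A, x⁻¹ * a * x = a⁻¹) ∧ A.index = 2

/-!
In a generalised dicyclic group every involution is central, and every element either squares to
the distinguished involution `y` or generates a normal subgroup. As point stabilisers of a
primitive group are maximal, every nontrivial element of `G` then fixes at most one point, so `G`
is a Frobenius group. For an involution `u` fixing `α` we get `C_G(u) = G_α`; a product of two
conjugates of `u` fixing a point would force them to fix a common point, hence to coincide. So
the `|G : C_G(u)| = |Ω|` commutators `(g u g⁻¹) u` lie in `F = {1} ∪ {fixed-point-free elements}`,
which has `|Ω|` elements by Burnside's lemma. Hence `F` consists of the products of two conjugates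
of `u`: it is a normal subgroup, inverted by `u` and therefore abelian, and acts semiregularly.
Its elements of prime order `p` (with `1`) form a nontrivial normal elementary abelian subgroup,
transitive by primitivity and hence regular.
-/

namespace IsGenDicyclic

section

variable {H : Type*} [Group H]

theorem exists_sq_eq_or_conj_eq (hH : IsGenDicyclic H) :
    ∃ y : H, y ≠ 1 ∧ y ^ 2 = 1 ∧
      ∀ d : H, d ^ 2 = y ∨ ∀ h : H, h * d * h⁻¹ = d ∨ h * d * h⁻¹ = d⁻¹ := by
  obtain ⟨A, y, x, hcomm, -, -, hy2, hy1, hxA, hx2, hinv, hidx⟩ := hH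
  have hyinv : y⁻¹ = y := inv_eq_of_mul_eq_one_right (by rw [← sq, hy2])
  have hcoset : ∀ h ∉ A, h * x ∈ A := fun h hh =>
    (Subgroup.mul_mem_iff_of_index_two hidx).mpr (iff_of_false hh hxA)
  refine ⟨y, hy1, hy2, fun d => ?_⟩
  by_cases hdA : d ∈ A
  · refine Or.inr fun h => ?_
    by_cases hhA : h ∈ A
    · exact Or.inl (by rw [hcomm h hhA d hdA, mul_inv_cancel_right])
    · refine Or.inr ?_
      have hb := hcoset h hhA
      calc h * d * h⁻¹ = (h * x) * (x⁻¹ * d * x) * (h * x)⁻¹ := by group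
        _ = d⁻¹ := by rw [hinv d hdA, hcomm _ hb _ (A.inv_mem hdA), mul_inv_cancel_right]
  · refine Or.inl ?_
    have hb := hcoset d hdA
    calc d ^ 2 = (d * x) * (x⁻¹ * (d * x) * x) * (x ^ 2)⁻¹ := by rw [sq, sq]; group
      _ = y := by rw [hinv _ hb, mul_inv_cancel, one_mul, hx2, hyinv]

end

variable {G : Type*} [Group G] {H : Subgroup G}

theorem exists_mem_sq_eq_or_conj_eq (hH : IsGenDicyclic H) :
    ∃ y ∈ H, y ≠ 1 ∧ y ^ 2 = 1 ∧
      ∀ d ∈ H, d ^ 2 = y ∨ ∀ h ∈ H, h * d * h⁻¹ = d ∨ h * d * h⁻¹ = d⁻¹ := by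
  obtain ⟨y, hy1, hy2, hy⟩ := hH.exists_sq_eq_or_conj_eq
  refine ⟨y, y.2, by simpa using hy1, by simpa using congrArg Subtype.val hy2, fun d hd => ?_⟩
  refine (hy ⟨d, hd⟩).imp (fun h => by simpa using congrArg Subtype.val h) fun h k hk => ?_
  simpa [Subtype.ext_iff] using h ⟨k, hk⟩

theorem le_centralizer_of_sq_eq_one (hH : IsGenDicyclic H) {u : G} (hu : u ∈ H)
    (hu2 : u ^ 2 = 1) : H ≤ Subgroup.centralizer {u} := by
  obtain ⟨y, -, hy1, -, hy⟩ := hH.exists_mem_sq_eq_or_conj_eq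
  have hinv : u⁻¹ = u := inv_eq_of_mul_eq_one_right (by rw [← sq, hu2])
  intro h hh
  have hhu : h * u * h⁻¹ = u := by
    rcases (hy u hu).resolve_left (fun h => hy1 (h ▸ hu2)) h hh with h | h
    · exact h
    · rw [h, hinv]
  rw [Subgroup.mem_centralizer_iff]
  rintro _ rfl
  rw [← mul_inv_eq_iff_eq_mul.mp hhu]

theorem exists_mem_sq_eq_or_le_normalizer (hH : IsGenDicyclic H) :
    ∃ y ∈ H, y ≠ 1 ∧ y ^ 2 = 1 ∧
      ∀ d ∈ H, d ^ 2 = y ∨ H ≤ Subgroup.normalizer (Subgroup.zpowers d : Set G) := by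
  obtain ⟨y, hyH, hy1, hy2, hy⟩ := hH.exists_mem_sq_eq_or_conj_eq
  refine ⟨y, hyH, hy1, hy2, fun d hd => (hy d hd).imp_right fun h => ?_⟩
  rw [Subgroup.zpowers_eq_closure, Subgroup.le_normalizer_closure_iff]
  rintro k hk _ rfl
  rcases h k hk with h | h <;> rw [h]
  · exact Subgroup.subset_closure rfl
  · exact inv_mem (Subgroup.subset_closure rfl)

end IsGenDicyclic

theorem Subgroup.exists_prime_exponent_normal_le {G : Type*} [Group G] [Finite G]
    {F : Subgroup G} [F.Normal] (hcomm : ∀ a ∈ F, ∀ b ∈ F, a * b = b * a) (hF : F ≠ ⊥) :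
    ∃ p : ℕ, p.Prime ∧ ∃ T ≤ F, T.Normal ∧ T ≠ ⊥ ∧ ∀ t ∈ T, t ^ p = 1 := by
  obtain ⟨p, hp, hpF⟩ := Nat.exists_prime_and_dvd (mt Subgroup.card_eq_one.mp hF)
  have := Fact.mk hp
  obtain ⟨f, hf⟩ := exists_prime_orderOf_dvd_card' p hpF
  let T : Subgroup G :=
    { carrier := {g | g ∈ F ∧ g ^ p = 1}
      one_mem' := ⟨F.one_mem, one_pow p⟩
      mul_mem' := fun ha hb => ⟨F.mul_mem ha.1 hb.1, by
        rw [(Commute.mul_pow (hcomm _ ha.1 _ hb.1)), ha.2, hb.2, one_mul]⟩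
      inv_mem' := fun ha => ⟨F.inv_mem ha.1, by rw [inv_pow, ha.2, inv_one]⟩ }
  refine ⟨p, hp, T, fun _ ht => ht.1, ⟨fun t ht g => ?_⟩, ?_, fun _ ht => ht.2⟩
  · exact ⟨‹F.Normal›.conj_mem t ht.1 g, by rw [conj_pow, ht.2, mul_one, mul_inv_cancel]⟩
  · refine Subgroup.ne_bot_iff_exists_ne_one.mpr ⟨⟨f, f.2, ?_⟩, ?_⟩
    · rw [← hf, ← Subgroup.orderOf_coe, pow_orderOf_eq_one]
    · intro h1
      have : f = 1 := Subtype.ext (congrArg Subtype.val h1 :)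
      rw [this, orderOf_one] at hf
      exact hp.one_lt.ne hf

namespace MulAction

variable {G Ω : Type*} [Group G] [MulAction G Ω]

theorem IsPreprimitive.of_isPrimitiveAction (h : IsPrimitiveAction G Ω) :
    IsPreprimitive G Ω where
  toIsPretransitive := h.1
  isTrivialBlock_of_isBlock hB := h.2 _ hB

theorem eq_bot_of_normal_of_le_stabilizer [IsPretransitive G Ω] [FaithfulSMul G Ω]
    {K : Subgroup G} [K.Normal] {α : Ω} (hK : K ≤ stabilizer G α) : K = ⊥ := by
  refine (Subgroup.eq_bot_iff_forall K).mpr fun k hk => eq_of_smul_eq_smul (α := Ω) fun ω => ?_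
  obtain ⟨g, rfl⟩ := exists_smul_eq G α ω
  have hconj : g⁻¹ * k * g ∈ stabilizer G α :=
    hK (by simpa using ‹K.Normal›.conj_mem k hk g⁻¹)
  rw [mem_stabilizer_iff, mul_smul, mul_smul, inv_smul_eq_iff] at hconj
  rw [hconj, one_smul]

theorem existsUnique_smul_eq_of_normal [IsPreprimitive G Ω] {T : Subgroup G} [T.Normal] (hT : T ≠ ⊥)
    (hfree : ∀ t ∈ T, ∀ ω : Ω, t • ω = ω → t = 1) (ω₁ ω₂ : Ω) : ∃! t : T, t • ω₁ = ω₂ := by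
  have : IsPretransitive T Ω := by
    refine IsQuasiPreprimitive.isPretransitive_of_normal fun hfix => hT ?_
    refine (Subgroup.eq_bot_iff_forall T).mpr fun t ht => hfree t ht ω₁ ?_
    exact (mem_fixedPoints.mp (hfix ▸ Set.mem_univ ω₁)) ⟨t, ht⟩
  obtain ⟨t, ht⟩ := exists_smul_eq T ω₁ ω₂
  refine ⟨t, ht, fun s hs => ?_⟩
  have : (t⁻¹ * s : T) • ω₁ = ω₁ := by rw [mul_smul, hs, ← ht, inv_smul_smul]
  rw [eq_comm, ← inv_mul_eq_one]
  exact Subtype.ext (hfree _ (t⁻¹ * s).2 ω₁ this)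

section Primitive

variable [IsPreprimitive G Ω] [Nontrivial Ω] [FaithfulSMul G Ω]

theorem normalizer_eq_stabilizer {K : Subgroup G} {α : Ω} (hK : K ≤ stabilizer G α)
    (hK1 : K ≠ ⊥) (hle : stabilizer G α ≤ Subgroup.normalizer (K : Set G)) :
    Subgroup.normalizer (K : Set G) = stabilizer G α := by
  refine ((IsPreprimitive.isCoatom_stabilizer_of_isPreprimitive G α).le_iff.mp hle).resolve_left
    fun htop => hK1 ?_
  have : K.Normal := Subgroup.normalizer_eq_top_iff.mp htop
  exact eq_bot_of_normal_of_le_stabilizer hK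

theorem eq_of_stabilizer_le {α β : Ω} (hα : stabilizer G α ≠ ⊥)
    (hle : stabilizer G α ≤ stabilizer G β) : α = β := by
  have heq : stabilizer G α = stabilizer G β :=
    (((IsPreprimitive.isCoatom_stabilizer_of_isPreprimitive G α).le_iff.mp hle).resolve_left
      (IsPreprimitive.isCoatom_stabilizer_of_isPreprimitive G β).ne_top).symm
  obtain ⟨g, rfl⟩ := exists_smul_eq G α β
  have hg : g ∈ Subgroup.normalizer (stabilizer G α : Set G) := by
    rw [Subgroup.mem_normalizer_iff_map_conj_eq]
    conv_rhs => rw [heq, stabilizer_smul_eq_stabilizer_map_conj]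
    rfl
  rw [normalizer_eq_stabilizer le_rfl hα Subgroup.le_normalizer] at hg
  exact (mem_stabilizer_iff.mp hg).symm

theorem eq_of_smul_eq_of_le_normalizer {d : G} {α β : Ω} (hd : d ≠ 1) (hα : d • α = α)
    (hβ : d • β = β) (hNα : stabilizer G α ≤ Subgroup.normalizer (Subgroup.zpowers d : Set G))
    (hNβ : stabilizer G β ≤ Subgroup.normalizer (Subgroup.zpowers d : Set G)) : α = β := by
  have hK : Subgroup.zpowers d ≤ stabilizer G α := Subgroup.zpowers_le.mpr hα
  rw [normalizer_eq_stabilizer hK (by simpa using hd) hNα] at hNβ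
  have hβ1 : stabilizer G β ≠ ⊥ :=
    Subgroup.ne_bot_iff_exists_ne_one.mpr ⟨⟨d, hβ⟩, fun h => hd (congrArg Subtype.val h :)⟩
  exact (eq_of_stabilizer_le hβ1 hNβ).symm

theorem fixedBy_subsingleton_of_isGenDicyclic (hstab : ∀ ω : Ω, IsGenDicyclic (stabilizer G ω))
    {d : G} (hd : d ≠ 1) : (fixedBy Ω d).Subsingleton := by
  have hsq : ∀ γ : Ω, ∀ e ∈ stabilizer G γ, (e ^ 2 ≠ 1 ∧ (e ^ 2) ^ 2 = 1) ∨
      stabilizer G γ ≤ Subgroup.normalizer (Subgroup.zpowers e : Set G) := fun γ e he => by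
    obtain ⟨y, -, hy1, hy2, hy⟩ := (hstab γ).exists_mem_sq_eq_or_le_normalizer
    exact (hy e he).imp_left fun (h : e ^ 2 = y) => h ▸ ⟨hy1, hy2⟩
  intro α hα β hβ
  have hinvol : ∀ e : G, e ≠ 1 → e ^ 2 = 1 → e • α = α → e • β = β → α = β :=
    fun e he1 he2 heα heβ => eq_of_smul_eq_of_le_normalizer he1 heα heβ
      ((hsq α e heα).resolve_left fun h => h.1 he2) ((hsq β e heβ).resolve_left fun h => h.1 he2)
  by_cases hN : stabilizer G α ≤ Subgroup.normalizer (Subgroup.zpowers d : Set G) ∧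
      stabilizer G β ≤ Subgroup.normalizer (Subgroup.zpowers d : Set G)
  · exact eq_of_smul_eq_of_le_normalizer hd hα hβ hN.1 hN.2
  -- otherwise `d ^ 2` is the involution of a stabiliser, and it fixes both points
  have hd2 : d ^ 2 ≠ 1 ∧ (d ^ 2) ^ 2 = 1 := by
    rcases hsq α d hα with h | hNα
    · exact h
    exact ((hsq β d hβ).resolve_right fun hNβ => hN ⟨hNα, hNβ⟩)
  exact hinvol _ hd2.1 hd2.2 (pow_mem (show d ∈ stabilizer G α from hα) 2)
    (pow_mem (show d ∈ stabilizer G β from hβ) 2)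

end Primitive

section FrobeniusKernel

variable (G Ω) in
def frobeniusKernel : Set G :=
  {g | g = 1 ∨ ∀ ω : Ω, g • ω ≠ ω}

theorem card_frobeniusKernel [Finite G] [Finite Ω] [IsPretransitive G Ω] [Nonempty Ω]
    (hfrob : ∀ g : G, g ≠ 1 → (fixedBy Ω g).Subsingleton) :
    Nat.card (frobeniusKernel G Ω) = Nat.card Ω := by
  classical
  have := Fintype.ofFinite G
  have := Fintype.ofFinite Ω
  -- summed over `G`, with Burnside's lemma on the left, this reads `|G| + |F| = |G| + |Ω|`
  have hpoint : ∀ g : G, Fintype.card (fixedBy Ω g) + (if g ∈ frobeniusKernel G Ω then 1 else 0)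
      = 1 + (if g = 1 then Fintype.card Ω else 0) := by
    intro g
    by_cases hg : g = 1
    · subst hg
      simp [frobeniusKernel, fixedBy_one_eq_univ, add_comm]
    by_cases hfree : ∀ ω : Ω, g • ω ≠ ω
    · have : IsEmpty (fixedBy Ω g) := ⟨fun ⟨ω, hω⟩ => hfree ω hω⟩
      simp [frobeniusKernel, hg, hfree, Fintype.card_eq_zero]
    · push Not at hfree
      obtain ⟨ω, hω⟩ := hfree
      have : Fintype.card (fixedBy Ω g) = 1 := Fintype.card_eq_one_iff.mpr
        ⟨⟨ω, hω⟩, fun ⟨ω', hω'⟩ => Subtype.ext (hfrob g hg hω' hω)⟩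
      simpa [frobeniusKernel, hg, this] using ⟨ω, hω⟩
  have hburnside : ∑ g : G, Fintype.card (fixedBy Ω g) = Fintype.card G := by
    have : Fintype.card (Quotient (orbitRel G Ω)) = 1 :=
      Fintype.card_eq_one_iff.mpr ⟨Quotient.mk _ (Classical.arbitrary Ω), fun q =>
        q.inductionOn fun ω => Quotient.sound (exists_smul_eq G (Classical.arbitrary Ω) ω)⟩
    rw [sum_card_fixedBy_eq_card_orbits_mul_card_group, this, one_mul]
  have hsum := Finset.sum_congr rfl fun g (_ : g ∈ Finset.univ) => hpoint g
  rw [Finset.sum_add_distrib, Finset.sum_add_distrib, hburnside,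
    Finset.sum_boole, Finset.sum_ite_eq', if_pos (Finset.mem_univ _)] at hsum
  simp only [Finset.sum_const, Finset.card_univ, smul_eq_mul, mul_one] at hsum
  rw [Nat.card_eq_fintype_card, Fintype.card_subtype, Nat.card_eq_fintype_card]
  exact Nat.add_left_cancel hsum

theorem inv_mem_frobeniusKernel {f : G} (hf : f ∈ frobeniusKernel G Ω) :
    f⁻¹ ∈ frobeniusKernel G Ω := by
  refine hf.imp (fun h => by rw [h, inv_one]) fun h ω hω => h ω ?_
  rw [inv_smul_eq_iff] at hω
  exact hω.symm

theorem conj_mem_frobeniusKernel {f : G} (hf : f ∈ frobeniusKernel G Ω) (g : G) :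
    g * f * g⁻¹ ∈ frobeniusKernel G Ω := by
  refine hf.imp (fun h => by rw [h, mul_one, mul_inv_cancel]) fun h ω hω => h (g⁻¹ • ω) ?_
  simpa [mul_smul] using congrArg (g⁻¹ • ·) hω

theorem mul_mem_frobeniusKernel_of_involutions
    (hfrob : ∀ g : G, g ≠ 1 → (fixedBy Ω g).Subsingleton) {v w : G} (hv : v * v = 1)
    (hw : w * w = 1) (heq : ∀ δ : Ω, v • δ = δ → w • δ = δ → v = w) :
    v * w ∈ frobeniusKernel G Ω := by
  by_contra hvw
  simp only [frobeniusKernel, Set.mem_ofPred_eq, not_or, not_forall, not_not] at hvw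
  obtain ⟨hne, δ, hδ⟩ := hvw
  -- `v` conjugates `v * w` to its inverse `w * v`, so it permutes the fixed points of `v * w`
  have hwv : (w * v) • δ = δ := by
    have : w * v = (v * w)⁻¹ :=
      (inv_eq_of_mul_eq_one_right (by rw [mul_assoc, ← mul_assoc w, hw, one_mul, hv])).symm
    rw [this, inv_smul_eq_iff, hδ]
  have hvδ : v • δ = δ :=
    hfrob _ hne (show (v * w) • v • δ = v • δ by rw [← mul_smul, mul_assoc, mul_smul, hwv]) hδ
  have hwδ : w • δ = δ := by rw [← hvδ, ← mul_smul, hwv, hvδ]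
  exact hne (by rw [heq δ hvδ hwδ, hw])

section Involution

variable {u : G} {α : Ω} (hfrob : ∀ g : G, g ≠ 1 → (fixedBy Ω g).Subsingleton)
  (hu1 : u ≠ 1) (hu2 : u ^ 2 = 1) (huα : u • α = α)
  (hcent : stabilizer G α ≤ Subgroup.centralizer {u})
include hfrob hu1 huα hcent

theorem conj_eq_conj_of_smul_eq {g h : G} {δ : Ω} (hg : (g * u * g⁻¹) • δ = δ)
    (hh : (h * u * h⁻¹) • δ = δ) : g * u * g⁻¹ = h * u * h⁻¹ := by
  have hpoint : ∀ k : G, (k * u * k⁻¹) • δ = δ → k • α = δ := fun k hk =>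
    hfrob _ (by simpa [mul_inv_eq_one] using hu1) (by simp [mul_smul, huα]) hk
  have hmem : h⁻¹ * g ∈ stabilizer G α := by
    rw [mem_stabilizer_iff, mul_smul, hpoint g hg, inv_smul_eq_iff, hpoint h hh]
  have hcomm : u * (h⁻¹ * g) = h⁻¹ * g * u :=
    Subgroup.mem_centralizer_iff.mp (hcent hmem) u rfl
  calc g * u * g⁻¹ = h * (h⁻¹ * g * u) * (h⁻¹ * g)⁻¹ * h⁻¹ := by group
    _ = h * u * h⁻¹ := by rw [← hcomm]; group

theorem centralizer_eq_stabilizer : Subgroup.centralizer {u} = stabilizer G α := by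
  refine le_antisymm (fun g hg => ?_) hcent
  have hcomm : u * g = g * u := Subgroup.mem_centralizer_iff.mp hg u rfl
  exact hfrob u hu1 (show u • g • α = g • α by rw [← mul_smul, hcomm, mul_smul, huα]) huα

include hu2

theorem conj_mul_conj_mem_frobeniusKernel (g h : G) :
    g * u * g⁻¹ * (h * u * h⁻¹) ∈ frobeniusKernel G Ω := by
  have hinvol : ∀ k : G, k * u * k⁻¹ * (k * u * k⁻¹) = 1 := fun k => by
    rw [← sq, conj_pow, hu2, mul_one, mul_inv_cancel]
  exact mul_mem_frobeniusKernel_of_involutions hfrob (hinvol g) (hinvol h)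
    fun _ => conj_eq_conj_of_smul_eq hfrob hu1 huα hcent

theorem frobeniusKernel_eq_range [Finite G] [Finite Ω] [IsPretransitive G Ω] :
    frobeniusKernel G Ω = Set.range fun g : G => g * u * g⁻¹ * u := by
  have hsub : (Set.range fun g : G => g * u * g⁻¹ * u) ⊆ frobeniusKernel G Ω := by
    rintro _ ⟨g, rfl⟩
    simpa using conj_mul_conj_mem_frobeniusKernel hfrob hu1 hu2 huα hcent g 1
  have hu : u⁻¹ = u := inv_eq_of_mul_eq_one_right (by rw [← sq, hu2])
  -- `g ↦ g * u * g⁻¹ * u` is the commutator map `g ↦ ⁅g, u⁆`, injective on `G ⧸ centralizer {u}`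
  have hrange : (Set.range fun g : G => g * u * g⁻¹ * u) =
      Set.range fun q => (Subgroup.quotientCentralizerEmbedding u q : G) := by
    have hcommutator : ∀ g : G,
        (Subgroup.quotientCentralizerEmbedding u g : G) = g * u * g⁻¹ * u := by
      simp [Subgroup.quotientCentralizerEmbedding_apply, commutatorElement_def, hu]
    ext x
    constructor
    · rintro ⟨g, rfl⟩
      exact ⟨g, hcommutator g⟩
    · rintro ⟨q, rfl⟩
      induction q using QuotientGroup.induction_on with
      | H g => exact ⟨g, (hcommutator g).symm⟩
  have hcard : Nat.card (Set.range fun g : G => g * u * g⁻¹ * u) = Nat.card Ω := by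
    rw [hrange, Nat.card_range_of_injective fun _ _ h =>
      (Subgroup.quotientCentralizerEmbedding u).injective (Subtype.ext h),
      ← Subgroup.index, centralizer_eq_stabilizer hfrob hu1 huα hcent,
      index_stabilizer_of_transitive]
  have : Nonempty Ω := ⟨α⟩
  refine (Set.eq_of_subset_of_ncard_le hsub ?_ (Set.toFinite _)).symm
  rw [← Nat.card_coe_set_eq, ← Nat.card_coe_set_eq, hcard, card_frobeniusKernel hfrob]

theorem conj_eq_inv_of_mem_frobeniusKernel [Finite G] [Finite Ω] [IsPretransitive G Ω] {f : G}
    (hf : f ∈ frobeniusKernel G Ω) : u * f * u = f⁻¹ := by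
  rw [frobeniusKernel_eq_range hfrob hu1 hu2 huα hcent] at hf
  obtain ⟨g, rfl⟩ := hf
  have hu : u⁻¹ = u := inv_eq_of_mul_eq_one_right (by rw [← sq, hu2])
  calc u * (g * u * g⁻¹ * u) * u = u * g * u * g⁻¹ * (u * u) := by group
    _ = u⁻¹ * g * u⁻¹ * g⁻¹ := by rw [← sq, hu2, mul_one, hu]
    _ = (g * u * g⁻¹ * u)⁻¹ := by group

theorem mul_mem_frobeniusKernel [Finite G] [Finite Ω] [IsPretransitive G Ω] {a b : G}
    (ha : a ∈ frobeniusKernel G Ω) (hb : b ∈ frobeniusKernel G Ω) :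
    a * b ∈ frobeniusKernel G Ω := by
  have hF := frobeniusKernel_eq_range hfrob hu1 hu2 huα hcent
  obtain ⟨g, rfl⟩ : a ∈ Set.range fun g : G => g * u * g⁻¹ * u := hF ▸ ha
  obtain ⟨h, hh⟩ : b⁻¹ ∈ Set.range fun g : G => g * u * g⁻¹ * u := hF ▸ inv_mem_frobeniusKernel hb
  have hu : u⁻¹ = u := inv_eq_of_mul_eq_one_right (by rw [← sq, hu2])
  have hprod : g * u * g⁻¹ * u * b = g * u * g⁻¹ * (h * u * h⁻¹) := by
    rw [← inv_inv b, ← hh]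
    calc g * u * g⁻¹ * u * (h * u * h⁻¹ * u)⁻¹ = g * u * g⁻¹ * (h * u⁻¹ * h⁻¹) := by group
      _ = g * u * g⁻¹ * (h * u * h⁻¹) := by rw [hu]
  rw [hprod]
  exact conj_mul_conj_mem_frobeniusKernel hfrob hu1 hu2 huα hcent g h

theorem exists_normal_commutative_fixedPointFree_subgroup [Finite G] [Finite Ω]
    [IsPretransitive G Ω] [Nontrivial Ω] :
    ∃ F : Subgroup G, F.Normal ∧ F ≠ ⊥ ∧ (∀ a ∈ F, ∀ b ∈ F, a * b = b * a) ∧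
      ∀ f ∈ F, ∀ ω : Ω, f • ω = ω → f = 1 := by
  let F : Subgroup G :=
    { carrier := frobeniusKernel G Ω
      one_mem' := Or.inl rfl
      mul_mem' := mul_mem_frobeniusKernel hfrob hu1 hu2 huα hcent
      inv_mem' := inv_mem_frobeniusKernel }
  refine ⟨F, ⟨fun f hf g => conj_mem_frobeniusKernel hf g⟩, ?_, fun a ha b hb => ?_,
    fun f hf ω hω => hf.resolve_right fun h => h ω hω⟩
  · rw [Ne, ← Subgroup.card_eq_one]
    change Nat.card (frobeniusKernel G Ω) ≠ 1
    rw [card_frobeniusKernel hfrob]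
    exact Finite.one_lt_card.ne'
  -- conjugation by `u` is an automorphism of `F` inverting every element, so `F` is abelian
  have hconj := fun {f} => conj_eq_inv_of_mem_frobeniusKernel (f := f) hfrob hu1 hu2 huα hcent
  have h := hconj (mul_mem_frobeniusKernel hfrob hu1 hu2 huα hcent ha hb)
  have hu : u⁻¹ = u := inv_eq_of_mul_eq_one_right (by rw [← sq, hu2])
  have hsplit : u * (a * b) * u = u * a * u * (u * b * u) :=
    calc _ = u * a * u⁻¹ * (u * b * u) := by group
      _ = _ := by rw [hu]
  rw [hsplit, hconj ha, hconj hb, mul_inv_rev] at h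
  exact inv_injective (by rw [mul_inv_rev, mul_inv_rev, h])

end Involution

end FrobeniusKernel

end MulAction

/-- A finite primitive permutation group whose point-stabilisers are
generalised dicyclic is of affine type: it contains a regular normal
elementary abelian `p`-subgroup. -/
theorem stmt18 {G Ω : Type*} [Group G] [Fintype G] [Fintype Ω] [MulAction G Ω]
    [FaithfulSMul G Ω] (hprim : IsPrimitiveAction G Ω)
    (hstab : ∀ ω : Ω, IsGenDicyclic (stabilizer G ω)) :
    ∃ p : ℕ, p.Prime ∧ ∃ T : Subgroup G, T.Normal ∧
      (∀ t ∈ T, t ^ p = 1) ∧ (∀ s ∈ T, ∀ t ∈ T, s * t = t * s) ∧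
      (∀ ω₁ ω₂ : Ω, ∃! t : T, t • ω₁ = ω₂) := by
  have := IsPreprimitive.of_isPrimitiveAction hprim
  rcases isEmpty_or_nonempty Ω with hΩ | ⟨⟨α⟩⟩
  · exact ⟨2, Nat.prime_two, ⊥, inferInstance, by simp, by simp, isEmptyElim⟩
  obtain ⟨y, hyα, hy1, hy2, -⟩ := (hstab α).exists_mem_sq_eq_or_le_normalizer
  have : Nontrivial Ω := by
    by_contra h
    rw [not_nontrivial_iff_subsingleton] at h
    exact hy1 (eq_of_smul_eq_smul (α := Ω) fun ω => Subsingleton.elim _ _)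
  obtain ⟨F, hFn, hF1, hFcomm, hFfree⟩ := exists_normal_commutative_fixedPointFree_subgroup
    (fun _ => fixedBy_subsingleton_of_isGenDicyclic hstab) hy1 hy2 hyα
    ((hstab α).le_centralizer_of_sq_eq_one hyα hy2)
  obtain ⟨p, hp, T, hTF, hTn, hT1, hTp⟩ :=
    Subgroup.exists_prime_exponent_normal_le hFcomm hF1
  exact ⟨p, hp, T, hTn, hTp, fun s hs t ht => hFcomm s (hTF hs) t (hTF ht),
    existsUnique_smul_eq_of_normal hT1 fun t ht => hFfree t (hTF ht)⟩
end
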